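/- In the known-variance two-nested-model setting, the minimal (over ζ ∈ ℝ) coverage probability of the interval β̂_{1·M̂} ± K σ_{1·M̂} for β_{1·M̂} is a continuous function of ρ on (−1,1) that equals Δ(0,K) = 2Φ(K)−1 at ρ = 0; consequently, if K = K_N (the (1−α/2)-quantile of N(0,1)) and ρ = 0, the naive interval has exact minimal coverage 1−α. -/

import Mathlib

open MeasureTheory ProbabilityTheory

/-- Standard normal cumulative distribution function `Φ`. -/
noncomputable def Phi (x : ℝ) : ℝ := ((gaussianReal 0 1) (Set.Iic x)).toReal

/-- `Δ(x, c) = Φ(x + c) − Φ(x − c)`. -/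
noncomputable def Dlt (x c : ℝ) : ℝ := Phi (x + c) - Phi (x - c)

/-- The coverage-probability formula of Proposition 1 (known variance):
`g(ζ,ρ) = Δ(0,K)Δ(ζ,C) + ∫_{−K}^{K}[1 − Δ((ζ+ρz)/√(1−ρ²), C/√(1−ρ²))]φ(z)dz`. -/
noncomputable def gcov (K C ζ ρ : ℝ) : ℝ :=
  Dlt 0 K * Dlt ζ C +
    ∫ z in Set.Icc (-K) K,
      (1 - Dlt ((ζ + ρ * z) / Real.sqrt (1 - ρ ^ 2)) (C / Real.sqrt (1 - ρ ^ 2))) *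
        gaussianPDFReal 0 1 z

/-- Minimal (over `ζ ∈ ℝ`) coverage probability of the interval
`β̂_{1·M̂} ± K σ_{1·M̂}` for `β_{1·M̂}`, as a function of `ρ`. -/
noncomputable def minCov (K C ρ : ℝ) : ℝ := ⨅ ζ : ℝ, gcov K C ζ ρ

/-!
At `ρ = 0` the integrand of `g` does not depend on `z`, and `∫_{-K}^{K} φ = Δ(0,K)` makes
`g(ζ,0) = Δ(0,K)` for every `ζ`.

For continuity, write the `Δ` in the integrand as a difference of two values of
`Φ((a + ρz)/√(1-ρ²))` with `a = ζ ± C`. As `ρ → ρ₀ ∈ (-1,1)` these converge uniformly in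
`a ∈ ℝ` and `z ∈ [-K,K]`: for `|a|` large they are all close to `0` or all close to `1`, and on
the remaining compact range of `a` joint continuity gives uniform convergence. Integrating against
`φ`, `g(·,ρ) → g(·,ρ₀)` uniformly in `ζ`, and infima of uniformly convergent bounded-below
families converge.
-/

open Filter Topology Set

lemma continuous_cdf (μ : Measure ℝ) [IsProbabilityMeasure μ] [NullSingletonClass μ] :
    Continuous (cdf μ) := by
  refine continuous_iff_continuousAt.2 fun x => ?_
  have hleft : Function.leftLim (cdf μ) x = cdf μ x := by
    have h := (cdf μ).measure_singleton x
    rw [measure_cdf, measure_singleton, eq_comm, ENNReal.ofReal_eq_zero, sub_nonpos] at h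
    exact le_antisymm ((monotone_cdf μ).leftLim_le le_rfl) h
  exact continuousAt_iff_continuous_left'_right'.2
    ⟨(monotone_cdf μ).continuousWithinAt_Iio_iff_leftLim_eq.2 hleft,
      continuousWithinAt_Ioi_iff_Ici.2 ((cdf μ).right_continuous x)⟩

instance : NullSingletonClass (gaussianReal 0 1) := nullSingletonClass_gaussianReal one_ne_zero

lemma Phi_eq_cdf : Phi = cdf (gaussianReal 0 1) := funext fun x => (cdf_eq_real _ x).symm

@[fun_prop]
lemma continuous_Phi : Continuous Phi := Phi_eq_cdf ▸ continuous_cdf _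

lemma Phi_neg (x : ℝ) : Phi (-x) = 1 - Phi x := by
  have hsymm : (gaussianReal 0 1).map (fun t => -t) = gaussianReal 0 1 := by
    rw [gaussianReal_map_neg, neg_zero]
  rw [Phi_eq_cdf, cdf_eq_real, cdf_eq_real]
  conv_lhs => rw [← hsymm, map_measureReal_apply (by fun_prop) measurableSet_Iic]
  rw [neg_preimage, neg_Iic, neg_neg, ← compl_Iio, measureReal_compl measurableSet_Iio,
    probReal_univ, measureReal_congr Iio_ae_eq_Iic]

lemma Phi_zero : Phi 0 = 1 / 2 := by
  linarith [neg_zero (G := ℝ) ▸ Phi_neg 0]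

lemma monotone_Phi : Monotone Phi := Phi_eq_cdf ▸ monotone_cdf _

lemma Phi_nonneg (x : ℝ) : 0 ≤ Phi x := Phi_eq_cdf ▸ cdf_nonneg _ x

lemma Phi_le_one (x : ℝ) : Phi x ≤ 1 := Phi_eq_cdf ▸ cdf_le_one _ x

lemma tendsto_Phi_atTop : Tendsto Phi atTop (𝓝 1) := Phi_eq_cdf ▸ tendsto_cdf_atTop _

lemma integral_Icc_gaussianPDFReal {a b : ℝ} (hab : a ≤ b) :
    ∫ t in Icc a b, gaussianPDFReal 0 1 t = Phi b - Phi a := by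
  have hIoc := (cdf (gaussianReal 0 1)).measure_Ioc a b
  rw [measure_cdf] at hIoc
  rw [← ENNReal.toReal_ofReal (integral_nonneg fun t => gaussianPDFReal_nonneg 0 1 t),
    ← gaussianReal_apply_eq_integral 0 one_ne_zero, ← measureReal_def,
    ← measureReal_congr Ioc_ae_eq_Icc, measureReal_def, hIoc, Phi_eq_cdf,
    ENNReal.toReal_ofReal (sub_nonneg.2 (monotone_cdf _ hab))]

lemma abs_Dlt_le_one (x c : ℝ) : |Dlt x c| ≤ 1 := by
  rw [Dlt, abs_le]
  constructor <;>
    linarith [Phi_le_one (x + c), Phi_nonneg (x - c), Phi_le_one (x - c), Phi_nonneg (x + c)]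

noncomputable def PhiCond (ρ a z : ℝ) : ℝ := Phi ((a + ρ * z) / √(1 - ρ ^ 2))

lemma Dlt_div_sqrt (ρ ζ C z : ℝ) :
    Dlt ((ζ + ρ * z) / √(1 - ρ ^ 2)) (C / √(1 - ρ ^ 2)) =
      PhiCond ρ (ζ + C) z - PhiCond ρ (ζ - C) z := by
  simp only [Dlt, PhiCond, ← add_div, ← sub_div]
  ring_nf

lemma PhiCond_neg (ρ a z : ℝ) : PhiCond ρ (-a) (-z) = 1 - PhiCond ρ a z := by
  rw [PhiCond, PhiCond, ← Phi_neg]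
  ring_nf

lemma PhiCond_le_one (ρ a z : ℝ) : PhiCond ρ a z ≤ 1 := Phi_le_one _

lemma continuousOn_PhiCond :
    ContinuousOn (fun p : ℝ × ℝ × ℝ => PhiCond p.1 p.2.1 p.2.2) (Ioo (-1) 1 ×ˢ univ) := by
  refine continuous_Phi.comp_continuousOn (ContinuousOn.div (by fun_prop) (by fun_prop) ?_)
  rintro ⟨ρ, _⟩ ⟨⟨h₁, h₂⟩, -⟩
  exact (Real.sqrt_pos.2 (by nlinarith)).ne'

lemma eventually_one_sub_lt_PhiCond (K : ℝ) {ε : ℝ} (hε : 0 < ε) :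
    ∀ᶠ a in atTop, ∀ ρ ∈ Ioo (-1 : ℝ) 1, ∀ z ∈ Icc (-K) K, 1 - ε < PhiCond ρ a z := by
  obtain ⟨T, hT⟩ :=
    eventually_atTop.1 (tendsto_Phi_atTop.eventually (lt_mem_nhds (sub_lt_self 1 hε)))
  filter_upwards [eventually_ge_atTop (max T 0 + K)] with a ha ρ ⟨hρ₁, hρ₂⟩ z hz
  have hρz : |ρ * z| ≤ K := by
    rw [abs_mul]
    exact (mul_le_of_le_one_left (abs_nonneg z) (abs_le.2 ⟨hρ₁.le, hρ₂.le⟩)).trans (abs_le.2 hz)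
  have hnum : max T 0 ≤ a + ρ * z := by linarith [neg_abs_le (ρ * z)]
  -- dividing the nonnegative numerator by `√(1 - ρ²) ∈ (0, 1]` can only increase it
  refine hT _ ((le_max_left T 0).trans (hnum.trans (le_div_self ?_ ?_ ?_)))
  · exact (le_max_right T 0).trans hnum
  · exact Real.sqrt_pos.2 (by nlinarith)
  · exact Real.sqrt_le_one.2 (by nlinarith)

lemma exists_dist_PhiCond_lt_of_le_abs (K : ℝ) {ε : ℝ} (hε : 0 < ε) :
    ∃ M, ∀ a, M ≤ |a| → ∀ ρ ∈ Ioo (-1 : ℝ) 1, ∀ ρ' ∈ Ioo (-1 : ℝ) 1, ∀ z ∈ Icc (-K) K,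
      dist (PhiCond ρ a z) (PhiCond ρ' a z) < ε := by
  obtain ⟨M, hM⟩ := eventually_atTop.1 (eventually_one_sub_lt_PhiCond K hε)
  have hnear : ∀ a ≥ M, ∀ ρ ∈ Ioo (-1 : ℝ) 1, ∀ ρ' ∈ Ioo (-1 : ℝ) 1, ∀ z ∈ Icc (-K) K,
      dist (PhiCond ρ a z) (PhiCond ρ' a z) < ε := fun a ha ρ hρ ρ' hρ' z hz => by
    have h := hM a ha ρ hρ z hz
    have h' := hM a ha ρ' hρ' z hz
    rw [Real.dist_eq, abs_sub_lt_iff]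
    constructor <;> linarith [PhiCond_le_one ρ a z, PhiCond_le_one ρ' a z]
  refine ⟨M, fun a ha ρ hρ ρ' hρ' z hz => ?_⟩
  rcases le_or_gt 0 a with ha₀ | ha₀
  · exact hnear a (by rwa [abs_of_nonneg ha₀] at ha) ρ hρ ρ' hρ' z hz
  · have hz' : -z ∈ Icc (-K) K := ⟨neg_le_neg hz.2, by linarith [hz.1]⟩
    have h := hnear (-a) (by rwa [abs_of_neg ha₀] at ha) ρ hρ ρ' hρ' (-z) hz'
    rwa [PhiCond_neg, PhiCond_neg, dist_sub_left] at h

lemma tendstoUniformlyOn_PhiCond (K : ℝ) {ρ₀ : ℝ} (hρ₀ : ρ₀ ∈ Ioo (-1 : ℝ) 1) :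
    TendstoUniformlyOn (fun ρ (p : ℝ × ℝ) => PhiCond ρ p.1 p.2) (fun p => PhiCond ρ₀ p.1 p.2)
      (𝓝 ρ₀) (univ ×ˢ Icc (-K) K) := by
  refine Metric.tendstoUniformlyOn_iff.2 fun ε hε => ?_
  obtain ⟨M, hM⟩ := exists_dist_PhiCond_lt_of_le_abs K hε
  obtain ⟨v, hv, hvε⟩ := (isCompact_Icc.prod isCompact_Icc).mem_uniformity_of_prod
    (f := fun ρ (p : ℝ × ℝ) => PhiCond ρ p.1 p.2) (k := Icc (-M) M ×ˢ Icc (-K) K)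
    (continuousOn_PhiCond.mono (prod_mono subset_rfl (subset_univ _))) hρ₀
    (Metric.dist_mem_uniformity hε)
  rw [isOpen_Ioo.nhdsWithin_eq hρ₀] at hv
  filter_upwards [hv, isOpen_Ioo.mem_nhds hρ₀] with ρ hρv hρ ⟨a, z⟩ hp
  obtain ⟨-, hz⟩ := hp
  by_cases ha : M ≤ |a|
  · exact hM a ha ρ₀ hρ₀ ρ hρ z hz
  · rw [dist_comm]
    exact hvε ρ hρv (a, z) ⟨abs_le.1 (not_le.1 ha).le, hz⟩

lemma abs_setIntegral_mul_gaussianPDFReal_le {s : Set ℝ} (hs : MeasurableSet s) {f : ℝ → ℝ}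
    {ε : ℝ} (hε : 0 ≤ ε) (hf : ∀ z ∈ s, |f z| ≤ ε) :
    |∫ z in s, f z * gaussianPDFReal 0 1 z| ≤ ε := by
  have hmass : ∫ z in s, gaussianPDFReal 0 1 z ≤ 1 :=
    (setIntegral_le_integral (integrable_gaussianPDFReal 0 1)
      (.of_forall (gaussianPDFReal_nonneg 0 1))).trans_eq
      (integral_gaussianPDFReal_eq_one 0 one_ne_zero)
  calc |∫ z in s, f z * gaussianPDFReal 0 1 z|
      ≤ ∫ z in s, ε * gaussianPDFReal 0 1 z :=
        norm_integral_le_of_norm_le (f := fun z => f z * gaussianPDFReal 0 1 z)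
          ((integrable_gaussianPDFReal 0 1).integrableOn.const_mul ε)
          (ae_restrict_of_forall_mem hs fun z hz => by
            rw [Real.norm_eq_abs, abs_mul, abs_of_nonneg (gaussianPDFReal_nonneg 0 1 z)]
            exact mul_le_mul_of_nonneg_right (hf z hz) (gaussianPDFReal_nonneg 0 1 z))
    _ = ε * ∫ z in s, gaussianPDFReal 0 1 z := integral_const_mul ε _
    _ ≤ ε := mul_le_of_le_one_right hε hmass

lemma continuous_gcov_integrand (C ζ ρ : ℝ) :
    Continuous fun z =>
      (1 - Dlt ((ζ + ρ * z) / √(1 - ρ ^ 2)) (C / √(1 - ρ ^ 2))) * gaussianPDFReal 0 1 z := by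
  simp only [Dlt, gaussianPDFReal_def]
  fun_prop

lemma tendstoUniformly_gcov (K C : ℝ) {ρ₀ : ℝ} (hρ₀ : ρ₀ ∈ Ioo (-1 : ℝ) 1) :
    TendstoUniformly (fun ρ ζ => gcov K C ζ ρ) (fun ζ => gcov K C ζ ρ₀) (𝓝 ρ₀) := by
  refine Metric.tendstoUniformly_iff.2 fun ε hε => ?_
  filter_upwards [Metric.tendstoUniformlyOn_iff.1 (tendstoUniformlyOn_PhiCond K hρ₀) (ε / 3)
    (by positivity)] with ρ hρ ζ
  rw [Real.dist_eq, gcov, gcov, add_sub_add_left_eq_sub,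
    ← integral_sub (continuous_gcov_integrand C ζ ρ₀).integrableOn_Icc
      (continuous_gcov_integrand C ζ ρ).integrableOn_Icc]
  simp_rw [← sub_mul, sub_sub_sub_cancel_left]
  refine (abs_setIntegral_mul_gaussianPDFReal_le measurableSet_Icc (by positivity)
    fun z hz => ?_).trans_lt (by linarith : 2 * (ε / 3) < ε)
  have h₁ := hρ (ζ + C, z) ⟨mem_univ _, hz⟩
  have h₂ := hρ (ζ - C, z) ⟨mem_univ _, hz⟩
  rw [Real.dist_eq] at h₁ h₂
  rw [Dlt_div_sqrt, Dlt_div_sqrt, abs_le]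
  constructor <;> linarith [abs_lt.1 h₁, abs_lt.1 h₂]

lemma neg_one_le_gcov (K C ζ ρ : ℝ) : -1 ≤ gcov K C ζ ρ := by
  have hprod : |Dlt 0 K * Dlt ζ C| ≤ 1 := by
    rw [abs_mul]
    exact mul_le_one₀ (abs_Dlt_le_one 0 K) (abs_nonneg _) (abs_Dlt_le_one ζ C)
  have hint : 0 ≤ ∫ z in Icc (-K) K,
      (1 - Dlt ((ζ + ρ * z) / √(1 - ρ ^ 2)) (C / √(1 - ρ ^ 2))) * gaussianPDFReal 0 1 z :=
    integral_nonneg fun z =>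
      mul_nonneg (sub_nonneg.2 ((le_abs_self _).trans (abs_Dlt_le_one _ _)))
        (gaussianPDFReal_nonneg 0 1 z)
  rw [gcov]
  linarith [(abs_le.1 hprod).1]

lemma bddBelow_range_gcov (K C ρ : ℝ) : BddBelow (range fun ζ => gcov K C ζ ρ) :=
  ⟨-1, forall_mem_range.2 fun ζ => neg_one_le_gcov K C ζ ρ⟩

lemma abs_ciInf_sub_ciInf_le {ι : Type*} [Nonempty ι] {f g : ι → ℝ} (hf : BddBelow (range f))
    (hg : BddBelow (range g)) {ε : ℝ} (h : ∀ i, |f i - g i| ≤ ε) :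
    |(⨅ i, f i) - ⨅ i, g i| ≤ ε := by
  rw [abs_sub_le_iff]
  constructor
  · have : (⨅ i, f i) - ε ≤ ⨅ i, g i :=
      le_ciInf fun i => by linarith [ciInf_le hf i, (abs_le.1 (h i)).2]
    linarith
  · have : (⨅ i, g i) - ε ≤ ⨅ i, f i :=
      le_ciInf fun i => by linarith [ciInf_le hg i, (abs_le.1 (h i)).1]
    linarith

lemma TendstoUniformly.continuousAt_ciInf {X ι : Type*} [TopologicalSpace X] [Nonempty ι]
    {F : X → ι → ℝ} {x₀ : X} (hF : TendstoUniformly F (F x₀) (𝓝 x₀))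
    (hbdd : ∀ x, BddBelow (range (F x))) : ContinuousAt (fun x => ⨅ i, F x i) x₀ :=
  Metric.tendsto_nhds.2 fun ε hε =>
    (Metric.tendstoUniformly_iff.1 hF (ε / 2) (half_pos hε)).mono fun x hx =>
      (abs_ciInf_sub_ciInf_le (hbdd x) (hbdd x₀) fun i => by
        rw [abs_sub_comm, ← Real.dist_eq]; exact (hx i).le).trans_lt (half_lt_self hε)

lemma continuousOn_minCov (K C : ℝ) : ContinuousOn (minCov K C) (Ioo (-1) 1) := fun _ hρ₀ =>
  ((tendstoUniformly_gcov K C hρ₀).continuousAt_ciInf (bddBelow_range_gcov K C)).continuousWithinAt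

lemma Dlt_zero_left (K : ℝ) : Dlt 0 K = 2 * Phi K - 1 := by
  rw [Dlt, zero_add, zero_sub, Phi_neg]
  ring

lemma gcov_zero (K C ζ : ℝ) (hK : 0 ≤ K) : gcov K C ζ 0 = Dlt 0 K := by
  simp only [gcov, zero_mul, add_zero, zero_pow two_ne_zero, sub_zero, Real.sqrt_one, div_one]
  rw [integral_const_mul, integral_Icc_gaussianPDFReal (neg_le_self hK), Dlt, zero_add, zero_sub]
  ring

lemma minCov_zero (K C : ℝ) (hK : 0 ≤ K) : minCov K C 0 = 2 * Phi K - 1 := by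
  simp only [minCov, gcov_zero K C _ hK, ciInf_const, Dlt_zero_left]

theorem minimal_coverage_continuous_and_exact_at_rho_zero_general
    (K C : ℝ) (hK : 0 < K)
    (α : ℝ) (hα1 : α < 1)
    (KN : ℝ) (hKN : Phi KN = 1 - α / 2) :
    ContinuousOn (fun ρ => minCov K C ρ) (Set.Ioo (-1 : ℝ) 1) ∧
    minCov K C 0 = 2 * Phi K - 1 ∧
    minCov KN C 0 = 1 - α := by
  refine ⟨continuousOn_minCov K C, minCov_zero K C hK.le, ?_⟩
  have hKN₀ : 0 ≤ KN := by
    by_contra! hneg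
    linarith [monotone_Phi hneg.le, Phi_zero]
  rw [minCov_zero KN C hKN₀, hKN]
  ring

/-- in the known-variance two-nested-model setting, the minimal coverage
probability `inf_ζ g(ζ,ρ)` of the naive-type interval for `β_{1·M̂}` is continuous in `ρ`
on `(−1,1)` and equals `Δ(0,K) = 2Φ(K) − 1` at `ρ = 0`; consequently, for `K = K_N` (the
`(1−α/2)`-quantile of `N(0,1)`) and `ρ = 0` the naive interval has exact minimal coverage
`1 − α`. -/
theorem minimal_coverage_continuous_and_exact_at_rho_zero
    (K C : ℝ) (hK : 0 < K) (hC : 0 < C)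
    (α : ℝ) (hα : 0 < α) (hα1 : α < 1)
    (KN : ℝ) (hKN : Phi KN = 1 - α / 2) :
    ContinuousOn (fun ρ => minCov K C ρ) (Set.Ioo (-1 : ℝ) 1) ∧
    minCov K C 0 = 2 * Phi K - 1 ∧
    minCov KN C 0 = 1 - α :=
  minimal_coverage_continuous_and_exact_at_rho_zero_general K C hK α hα1 KN hKN
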